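/- Combination of strongly normalizing rewriting relations: let A be a set and let ⇝₁ and ⇝₂ be two strongly normalizing binary relations on A such that ⇝₁ is confluent (so every element M has a unique ⇝₁-normal form nf₁(M)). If for all M, N ∈ A, M ⇝₂ N implies nf₁(M) ⇝₂⁺ nf₁(N) (where ⇝₂⁺ is the transitive closure of ⇝₂), then the union ⇝₁ ∪ ⇝₂ is strongly normalizing. -/
import Mathlib


/-- Combination of strongly normalizing rewriting relations.
Let `r₁`, `r₂` be strongly normalizing relations on `A` with `r₁` confluent (so
every element has a unique `r₁`-normal form).  If `M r₂ N` implies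
`nf₁(M) r₂⁺ nf₁(N)`, then `r₁ ∪ r₂` is strongly normalizing. -/
theorem union_strongly_normalizing {A : Type*} (r₁ r₂ : A → A → Prop)
    (h₁ : ∀ a : A, Acc (fun x y => r₁ y x) a)
    (h₂ : ∀ a : A, Acc (fun x y => r₂ y x) a)
    (hconf : ∀ a b c : A, Relation.ReflTransGen r₁ a b → Relation.ReflTransGen r₁ a c →
        ∃ d, Relation.ReflTransGen r₁ b d ∧ Relation.ReflTransGen r₁ c d)
    (hcomm : ∀ M N, r₂ M N → ∀ Mn Nn,
        (Relation.ReflTransGen r₁ M Mn ∧ ∀ P, ¬ r₁ Mn P) →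
        (Relation.ReflTransGen r₁ N Nn ∧ ∀ P, ¬ r₁ Nn P) →
        Relation.TransGen r₂ Mn Nn) :
    ∀ a : A, Acc (fun x y => r₁ y x ∨ r₂ y x) a := by
  -- existence of r₁-normal forms
  have hnf : ∀ a : A, ∃ n, Relation.ReflTransGen r₁ a n ∧ ∀ P, ¬ r₁ n P := by
    intro a
    induction h₁ a with
    | intro a _ ih =>
      by_cases h : ∃ b, r₁ a b
      · obtain ⟨b, hb⟩ := h
        obtain ⟨n, hn, hnorm⟩ := ih b hb
        exact ⟨n, Relation.ReflTransGen.head hb hn, hnorm⟩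
      · exact ⟨a, Relation.ReflTransGen.refl, fun P hP => h ⟨P, hP⟩⟩
  -- a normal form of `a` is a normal form of any one-step r₁-reduct of `a`
  have hpres : ∀ a b n : A, r₁ a b → Relation.ReflTransGen r₁ a n → (∀ P, ¬ r₁ n P) →
      Relation.ReflTransGen r₁ b n := by
    intro a b n hab han hn
    obtain ⟨d, hnd, hbd⟩ := hconf a n b han (Relation.ReflTransGen.single hab)
    rcases (Relation.ReflTransGen.cases_head hnd) with rfl | ⟨c, hc, _⟩
    · exact hbd
    · exact absurd hc (hn _)
  -- main argument
  have key : ∀ n : A, Acc (fun x y => Relation.TransGen r₂ y x) n → (∀ P, ¬ r₁ n P) →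
      ∀ a, Relation.ReflTransGen r₁ a n → Acc (fun x y => r₁ y x ∨ r₂ y x) a := by
    intro n accn
    induction accn with
    | intro n _ ihn =>
      intro hn a
      induction h₁ a with
      | intro a _ iha =>
        intro han
        constructor
        intro b hb
        rcases hb with hb | hb
        · exact iha b hb (hpres a b n hb han hn)
        · obtain ⟨m, hbm, hmn⟩ := hnf b
          have htg : Relation.TransGen r₂ n m := hcomm a b hb n m ⟨han, hn⟩ ⟨hbm, hmn⟩
          exact ihn m htg hmn b hbm
  intro a
  obtain ⟨n, han, hn⟩ := hnf a
  have accn : Acc (fun x y => Relation.TransGen r₂ y x) n := by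
    have := (h₂ n).transGen
    exact Subrelation.accessible (fun {x y} h => h.swap) this
  exact key n accn hn a han
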